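/- arXiv:2308.10568 — 4 statements merged into one kernel-verified Lean document; each statement's English description precedes it below -/
import Mathlib

section
/- Let (Ω, ℱ, ℙ) be a probability space carrying independent random variables Z and B, with Z standard normal and B Bernoulli with parameter p ∈ (0,1). Fix s > 0, σ > 0, t > 0, μ, q ∈ ℝ, κ ∈ ℝ, and set S⁰ := s e^{(μ−q−σ²/2)t + σ√t Z} and S := S⁰ (1 + κB). Then Cov(S, B) = κ 𝔼[S⁰] Var(B) = κ s e^{(μ−q)t} p(1−p); moreover if Var(S) > 0, the correlation between S and B equals κ 𝔼[S⁰] √(Var(B)/Var(S)). (This is the stock–default correlation identity of Proposition 1, with B playing the role of the first-to-default indicator J_t, whose success probability is p = 1 − e^{−λt}.) -/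
open MeasureTheory intervalIntegral Real ProbabilityTheory Filter Asymptotics

/-- The standard Gaussian measure on ℝ. -/
noncomputable def gaussMeasure : Measure ℝ := gaussianReal 0 1

/-- The standard normal CDF. -/
noncomputable def Phi (x : ℝ) : ℝ :=
  ∫ u in Set.Iic x, Real.exp (-u ^ 2 / 2) / Real.sqrt (2 * Real.pi)

/-- The standard normal density. -/
noncomputable def gaussPdf (x : ℝ) : ℝ := Real.exp (-x ^ 2 / 2) / Real.sqrt (2 * Real.pi)

/-- Black–Scholes `d₁` with volatility `σ` and drift `m`. -/
noncomputable def d1 (σ m s k t : ℝ) : ℝ :=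
  (Real.log (s / k) + (m + σ ^ 2 / 2) * t) / (σ * Real.sqrt t)

/-- Black–Scholes `d₂` with volatility `σ` and drift `m`. -/
noncomputable def d2 (σ m s k t : ℝ) : ℝ := d1 σ m s k t - σ * Real.sqrt t

/-- Black–Scholes call price (undiscounted) with volatility `σ` and drift `m`. -/
noncomputable def BSC (σ m s k t : ℝ) : ℝ :=
  s * Real.exp (m * t) * Phi (d1 σ m s k t) - k * Phi (d2 σ m s k t)

/-- Black–Scholes put price (undiscounted) with volatility `σ` and drift `m`. -/
noncomputable def BSP (σ m s k t : ℝ) : ℝ :=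
  k * Phi (-d2 σ m s k t) - s * Real.exp (m * t) * Phi (-d1 σ m s k t)

/-- The function `Υ₀` from the ATM forward valuation formula. -/
noncomputable def Ups0 (t x y : ℝ) : ℝ :=
  y / (x * Real.sqrt (2 * x + y ^ 2)) * (Phi (Real.sqrt ((2 * x + y ^ 2) * t)) - 1 / 2)
    - 1 / x * (Real.exp (-x * t) * Phi (y * Real.sqrt t) - 1 / 2)

/-- The second-order approximation `Υ̃` of the generalized `Υ` function. -/
noncomputable def UpsTilde (t x y z : ℝ) : ℝ :=
  Ups0 t x y
    + 2 / Real.sqrt (2 * x + y ^ 2) * (Phi (Real.sqrt ((2 * x + y ^ 2) * t)) - 1 / 2)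
      * (z - y / 2 * z ^ 2)

/-- Covariance of two real random variables. -/
noncomputable def cov {Ω : Type*} [MeasurableSpace Ω] (P : Measure Ω) (X Y : Ω → ℝ) : ℝ :=
  (∫ ω, X ω * Y ω ∂P) - (∫ ω, X ω ∂P) * (∫ ω, Y ω ∂P)

/-- Variance of a real random variable. -/
noncomputable def var {Ω : Type*} [MeasurableSpace Ω] (P : Measure Ω) (X : Ω → ℝ) : ℝ :=
  cov P X X

/-- Correlation of two real random variables. -/
noncomputable def corr {Ω : Type*} [MeasurableSpace Ω] (P : Measure Ω) (X Y : Ω → ℝ) : ℝ :=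
  cov P X Y / Real.sqrt (var P X * var P Y)

/-!
Since `S⁰` is a function of `Z`, it is independent of `B`, and `B² = B`. Writing
`S = S⁰ + κ S⁰ B`, independence factorises every expectation, so
`Cov(S, B) = κ (𝔼[S⁰ B²] - 𝔼[S⁰ B] 𝔼[B]) = κ 𝔼[S⁰] Var(B)`; the lognormal mean
`𝔼[S⁰] = s e^{(μ-q)t}` comes from the Gaussian moment generating function at `σ√t`.
-/

section Covariance

variable {Ω : Type*} [MeasurableSpace Ω] {P : Measure Ω}

lemma cov_mul_one_add_mul_of_indepFun [IsFiniteMeasure P] {X B : Ω → ℝ}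
    (hXB : IndepFun X B P) (hX : Integrable X P) (hB : MemLp B 2 P) (κ : ℝ) :
    cov P (fun ω => X ω * (1 + κ * B ω)) B = κ * (∫ ω, X ω ∂P) * var P B := by
  have hB_int : Integrable B P := hB.integrable one_le_two
  have hBB_int : Integrable (fun ω => B ω * B ω) P := by simpa only [sq] using hB.integrable_sq
  have hXBB : IndepFun X (fun ω => B ω * B ω) P :=
    hXB.comp measurable_id (measurable_id.mul measurable_id)
  have hXB_int : Integrable (fun ω => X ω * B ω) P := hXB.integrable_mul hX hB_int
  have hXBB_int : Integrable (fun ω => X ω * (B ω * B ω)) P :=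
    hXBB.integrable_mul hX hBB_int
  have hEXB : ∫ ω, X ω * B ω ∂P = (∫ ω, X ω ∂P) * ∫ ω, B ω ∂P :=
    hXB.integral_mul_eq_mul_integral hX.1 hB_int.1
  have hEXBB : ∫ ω, X ω * (B ω * B ω) ∂P = (∫ ω, X ω ∂P) * ∫ ω, B ω * B ω ∂P :=
    hXBB.integral_mul_eq_mul_integral hX.1 hBB_int.1
  have hS : (fun ω => X ω * (1 + κ * B ω)) = fun ω => X ω + κ * (X ω * B ω) := by
    ext ω; ring
  have hSB : (fun ω => X ω * (1 + κ * B ω) * B ω)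
      = fun ω => X ω * B ω + κ * (X ω * (B ω * B ω)) := by
    ext ω; ring
  rw [cov, var, cov, hS, hSB, integral_add hX (hXB_int.const_mul κ),
    integral_add hXB_int (hXBB_int.const_mul κ), MeasureTheory.integral_const_mul,
    MeasureTheory.integral_const_mul, hEXB, hEXBB]
  ring

lemma corr_eq_mul_sqrt_div_of_cov_eq {X Y : Ω → ℝ} {a : ℝ} (h : cov P X Y = a * var P Y)
    (hY : 0 ≤ var P Y) : corr P X Y = a * √(var P Y / var P X) := by
  rw [corr, h, sqrt_mul' _ hY, sqrt_div hY]
  rcases hY.eq_or_lt with hY0 | hYpos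
  · simp [← hY0]
  · have hsqrt : √(var P Y) ≠ 0 := (sqrt_pos.mpr hYpos).ne'
    calc a * var P Y / (√(var P X) * √(var P Y))
        = a * √(var P Y) * √(var P Y) / (√(var P X) * √(var P Y)) := by
          rw [mul_assoc, mul_self_sqrt hY]
      _ = a * (√(var P Y) / √(var P X)) := by
          rw [mul_div_mul_right _ _ hsqrt, mul_div_assoc]

end Covariance

section Indicator

variable {Ω : Type*} [MeasurableSpace Ω] {P : Measure Ω} {B : Ω → ℝ}

lemma memLp_two_of_eq_zero_or_one [IsFiniteMeasure P] (hmB : Measurable B)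
    (hB : ∀ ω, B ω = 0 ∨ B ω = 1) : MemLp B 2 P :=
  MemLp.of_bound hmB.aestronglyMeasurable 1 <| ae_of_all _ fun ω => by
    rcases hB ω with h | h <;> simp [h]

lemma integral_eq_measureReal_of_eq_zero_or_one (hmB : Measurable B)
    (hB : ∀ ω, B ω = 0 ∨ B ω = 1) : ∫ ω, B ω ∂P = P.real {ω | B ω = 1} := by
  have hB_ind : B = Set.indicator {ω | B ω = 1} 1 := by
    ext ω; rcases hB ω with h | h <;> simp [h]
  conv_lhs => rw [hB_ind]
  exact integral_indicator_one (hmB (measurableSet_singleton 1))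

lemma var_eq_of_eq_zero_or_one (hmB : Measurable B) (hB : ∀ ω, B ω = 0 ∨ B ω = 1) :
    var P B = P.real {ω | B ω = 1} * (1 - P.real {ω | B ω = 1}) := by
  have hBB : (fun ω => B ω * B ω) = B := by
    ext ω; rcases hB ω with h | h <;> simp [h]
  rw [var, cov, hBB, integral_eq_measureReal_of_eq_zero_or_one hmB hB]
  ring

end Indicator

section Gaussian

variable {Ω : Type*} [MeasurableSpace Ω] {P : Measure Ω} {Z : Ω → ℝ} {m : ℝ} {v : NNReal}

lemma integrable_exp_add_mul_of_map_eq_gaussianReal [IsProbabilityMeasure P]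
    (hZ : P.map Z = gaussianReal m v) (a c : ℝ) :
    Integrable (fun ω => rexp (a + c * Z ω)) P := by
  have h : Integrable (fun ω => rexp (c * Z ω)) P := by
    rw [← mgf_pos_iff, mgf_gaussianReal hZ]
    exact exp_pos _
  simpa only [exp_add] using h.const_mul (rexp a)

lemma integral_exp_add_mul_of_map_eq_gaussianReal (hZ : P.map Z = gaussianReal m v)
    (a c : ℝ) : ∫ ω, rexp (a + c * Z ω) ∂P = rexp (a + m * c + v * c ^ 2 / 2) := by
  have h : ∫ ω, rexp (c * Z ω) ∂P = rexp (m * c + v * c ^ 2 / 2) := mgf_gaussianReal hZ c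
  simp only [exp_add, MeasureTheory.integral_const_mul] at h ⊢
  rw [h]
  ring

end Gaussian

theorem stock_default_correlation_general
    {Ω : Type*} [MeasurableSpace Ω] (P : Measure Ω) [IsProbabilityMeasure P]
    (Z B : Ω → ℝ) (hmB : Measurable B)
    (hindep : IndepFun Z B P)
    (hZ : Measure.map Z P = gaussianReal 0 1)
    (p : ℝ) (hp : p ∈ Set.Ioo (0 : ℝ) 1)
    (hB01 : ∀ ω, B ω = 0 ∨ B ω = 1)
    (hBp : P {ω | B ω = 1} = ENNReal.ofReal p)
    (s σ t μ q κ : ℝ) (ht : 0 < t)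
    (S0 S : Ω → ℝ)
    (hS0 : S0 = fun ω => s * Real.exp ((μ - q - σ ^ 2 / 2) * t + σ * Real.sqrt t * Z ω))
    (hS : S = fun ω => S0 ω * (1 + κ * B ω)) :
    cov P S B = κ * (∫ ω, S0 ω ∂P) * var P B
      ∧ cov P S B = κ * (s * Real.exp ((μ - q) * t)) * (p * (1 - p))
      ∧ (0 < var P S →
          corr P S B = κ * (∫ ω, S0 ω ∂P) * Real.sqrt (var P B / var P S)) := by
  have hS0_int : Integrable S0 P := by
    rw [hS0]
    exact (integrable_exp_add_mul_of_map_eq_gaussianReal hZ _ _).const_mul s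
  have hES0 : ∫ ω, S0 ω ∂P = s * rexp ((μ - q) * t) := by
    rw [hS0, MeasureTheory.integral_const_mul, integral_exp_add_mul_of_map_eq_gaussianReal hZ,
      mul_pow, sq_sqrt ht.le]
    congr 2
    push_cast
    ring
  have hindepS0 : IndepFun S0 B P := by
    rw [hS0]
    exact hindep.comp (φ := fun z => s * rexp ((μ - q - σ ^ 2 / 2) * t + σ * √t * z))
      (by fun_prop) measurable_id
  have hcov : cov P S B = κ * (∫ ω, S0 ω ∂P) * var P B := hS ▸
    cov_mul_one_add_mul_of_indepFun hindepS0 hS0_int (memLp_two_of_eq_zero_or_one hmB hB01) κ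
  have hvarB : var P B = p * (1 - p) := by
    rw [var_eq_of_eq_zero_or_one hmB hB01, measureReal_def, hBp, ENNReal.toReal_ofReal hp.1.le]
  refine ⟨hcov, by rw [hcov, hES0, hvarB], fun _ => corr_eq_mul_sqrt_div_of_cov_eq hcov ?_⟩
  rw [hvarB]
  exact mul_nonneg hp.1.le (sub_nonneg.2 hp.2.le)

/-- Stock–default covariance and correlation identity (Proposition 1):
`Cov(S, B) = κ 𝔼[S⁰] Var(B) = κ s e^{(μ−q)t} p(1−p)`, and when `Var(S) > 0`
the correlation between `S` and `B` equals `κ 𝔼[S⁰] √(Var(B)/Var(S))`. -/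
theorem stock_default_correlation
    {Ω : Type*} [MeasurableSpace Ω] (P : Measure Ω) [IsProbabilityMeasure P]
    (Z B : Ω → ℝ) (hmZ : Measurable Z) (hmB : Measurable B)
    (hindep : IndepFun Z B P)
    (hZ : Measure.map Z P = gaussianReal 0 1)
    (p : ℝ) (hp : p ∈ Set.Ioo (0 : ℝ) 1)
    (hB01 : ∀ ω, B ω = 0 ∨ B ω = 1)
    (hBp : P {ω | B ω = 1} = ENNReal.ofReal p)
    (s σ t μ q κ : ℝ) (hs : 0 < s) (hσ : 0 < σ) (ht : 0 < t)
    (S0 S : Ω → ℝ)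
    (hS0 : S0 = fun ω => s * Real.exp ((μ - q - σ ^ 2 / 2) * t + σ * Real.sqrt t * Z ω))
    (hS : S = fun ω => S0 ω * (1 + κ * B ω)) :
    cov P S B = κ * (∫ ω, S0 ω ∂P) * var P B
      ∧ cov P S B = κ * (s * Real.exp ((μ - q) * t)) * (p * (1 - p))
      ∧ (0 < var P S →
          corr P S B = κ * (∫ ω, S0 ω ∂P) * Real.sqrt (var P B / var P S)) :=
  stock_default_correlation_general P Z B hmB hindep hZ p hp hB01 hBp s σ t μ q κ ht S0 S hS0 hS
end

section
/- Let (Ω, ℱ, ℙ) be a probability space carrying independent random variables Z and B, with Z standard normal and B Bernoulli with parameter p ∈ (0,1). Fix s > 0, σ > 0, t > 0, μ, q ∈ ℝ, κ > −1, and set S := s e^{(μ−q−σ²/2)t + σ√t Z}(1 + κB). Then D := e^{σ²t}(1 + κp(2+κ)) − (1 + κp(2+κp)) > 0, Var(S) = s² e^{2(μ−q)t} D > 0, and the correlation between S and B equals κ √( p(1−p) / D ). -/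
open MeasureTheory intervalIntegral Real ProbabilityTheory Filter Asymptotics

/-!
With `a = σ √t`, the price factors as `S = s e^{(μ - q) t} · e^{aZ - a²/2} · (1 + κB)`.
For every `b` the normalized exponential `e^{bZ - b²/2}` has mean one (the Gaussian moment
generating function) and is independent of `B`, so `E[e^{bZ - b²/2} f(B)] = (1 - p) f(0) + p f(1)`.
The first two moments of `S` and the mixed moment `E[S B]` are of this form, `S²` with `b = 2a`
and an extra factor `e^{a²} = e^{σ² t}`; the variance and correlation are then algebra.
-/

section GaussianBernoulli

variable {Ω : Type*} [MeasurableSpace Ω] {P : Measure Ω} {Z B : Ω → ℝ} {p : ℝ}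

lemma integral_comp_of_forall_eq_zero_or_eq_one [IsProbabilityMeasure P] (hmB : Measurable B)
    (hB01 : ∀ ω, B ω = 0 ∨ B ω = 1) (hp0 : 0 ≤ p)
    (hBp : P {ω | B ω = 1} = ENNReal.ofReal p)
    (f : ℝ → ℝ) :
    ∫ ω, f (B ω) ∂P = (1 - p) * f 0 + p * f 1 := by
  have hE : MeasurableSet {ω | B ω = 1} := hmB (measurableSet_singleton 1)
  have hf : (fun ω => f (B ω))
      = fun ω => f 0 + {ω | B ω = 1}.indicator (fun _ => f 1 - f 0) ω := by
    funext ω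
    rcases hB01 ω with h | h <;> simp [h]
  rw [hf, integral_add (integrable_const _) ((integrable_const _).indicator hE),
    MeasureTheory.integral_const, integral_indicator_const _ hE, probReal_univ, measureReal_def,
    hBp, ENNReal.toReal_ofReal hp0, smul_eq_mul, smul_eq_mul]
  ring

lemma integral_exp_mul_sub_mul_comp (hmZ : Measurable Z) (hmB : Measurable B)
    (hindep : IndepFun Z B P) (hZ : P.map Z = gaussianReal 0 1) (a : ℝ) {f : ℝ → ℝ}
    (hf : Measurable f) :
    ∫ ω, exp (a * Z ω - a ^ 2 / 2) * f (B ω) ∂P = ∫ ω, f (B ω) ∂P := by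
  have hindep' : IndepFun (fun ω => exp (a * Z ω - a ^ 2 / 2)) (fun ω => f (B ω)) P :=
    hindep.comp (φ := fun z => exp (a * z - a ^ 2 / 2)) (by fun_prop) hf
  have hmgf : ∫ ω, exp (a * Z ω) ∂P = exp (a ^ 2 / 2) := by
    simpa [mgf] using mgf_gaussianReal hZ a
  have hnormalized : ∫ ω, exp (a * Z ω - a ^ 2 / 2) ∂P = 1 := by
    simp_rw [exp_sub]
    rw [MeasureTheory.integral_div, hmgf, div_self (exp_pos _).ne']
  rw [hindep'.integral_fun_mul_eq_mul_integral (by fun_prop)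
    (hf.comp hmB).aestronglyMeasurable, hnormalized, one_mul]

lemma exp_mul_sub_sq_mul_self (a z : ℝ) :
    exp (a * z - a ^ 2 / 2) * exp (a * z - a ^ 2 / 2)
      = exp (a ^ 2) * exp (2 * a * z - (2 * a) ^ 2 / 2) := by
  rw [← exp_add, ← exp_add]
  ring_nf

/-- `hlaw` encodes the joint law of a standard Gaussian `Z` and an independent Bernoulli(`p`)
variable `B`. -/
lemma var_cov_of_integral_exp_mul_sub_mul_comp
    (hlaw : ∀ (b : ℝ) {f : ℝ → ℝ}, Measurable f →
      ∫ ω, exp (b * Z ω - b ^ 2 / 2) * f (B ω) ∂P = (1 - p) * f 0 + p * f 1)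
    {X : Ω → ℝ} {m a κ : ℝ}
    (hX : ∀ ω, X ω = m * (exp (a * Z ω - a ^ 2 / 2) * (1 + κ * B ω))) :
    var P X = m ^ 2 * (exp (a ^ 2) * (1 + κ * p * (2 + κ)) - (1 + κ * p) ^ 2)
      ∧ cov P X B = m * κ * (p * (1 - p))
      ∧ var P B = p * (1 - p) := by
  have hEX : ∫ ω, X ω ∂P = m * (1 + κ * p) := by
    simp_rw [hX]
    rw [MeasureTheory.integral_const_mul, hlaw a (f := fun b => 1 + κ * b) (by fun_prop)]
    ring
  have hEXX : ∫ ω, X ω * X ω ∂P = m ^ 2 * exp (a ^ 2) * (1 + κ * p * (2 + κ)) := by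
    have hXX (ω : Ω) : X ω * X ω = m ^ 2 * exp (a ^ 2)
        * (exp (2 * a * Z ω - (2 * a) ^ 2 / 2) * (1 + κ * B ω) ^ 2) := by
      rw [hX]
      linear_combination m ^ 2 * (1 + κ * B ω) ^ 2 * exp_mul_sub_sq_mul_self a (Z ω)
    simp_rw [hXX]
    rw [MeasureTheory.integral_const_mul,
      hlaw (2 * a) (f := fun b => (1 + κ * b) ^ 2) (by fun_prop)]
    ring
  have hEXB : ∫ ω, X ω * B ω ∂P = m * ((1 + κ) * p) := by
    simp_rw [hX, mul_assoc m, mul_assoc (exp _)]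
    rw [MeasureTheory.integral_const_mul,
      hlaw a (f := fun b => (1 + κ * b) * b) (by fun_prop)]
    ring
  have hEB : ∫ ω, B ω ∂P = p := by simpa using hlaw 0 measurable_id
  have hEBB : ∫ ω, B ω * B ω ∂P = p := by
    simpa using hlaw 0 (f := fun b => b * b) (by fun_prop)
  refine ⟨?_, ?_, ?_⟩
  · rw [var, cov, hEXX, hEX]; ring
  · rw [cov, hEXB, hEX, hEB]; ring
  · rw [var, cov, hEBB, hEB]; ring

end GaussianBernoulli

/-- The left side equals `(X - 1) (p (1 + κ)² + 1 - p) + κ² p (1 - p)`. -/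
lemma mul_one_add_sub_one_add_pos {X p κ : ℝ} (hX : 1 < X) (hp0 : 0 ≤ p) (hp1 : p < 1) :
    0 < X * (1 + κ * p * (2 + κ)) - (1 + κ * p * (2 + κ * p)) := by
  have h : 0 < p * (1 + κ) ^ 2 + (1 - p) := by nlinarith [sq_nonneg (1 + κ)]
  nlinarith [mul_pos (sub_pos.2 hX) h,
    mul_nonneg (sq_nonneg κ) (mul_nonneg hp0 (sub_pos.2 hp1).le)]

lemma mul_mul_div_sqrt_sq_mul_mul {m k v D : ℝ} (hm : 0 < m) (hv : 0 < v) :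
    m * k * v / √(m ^ 2 * D * v) = k * √(v / D) := by
  rw [mul_assoc (m ^ 2), sqrt_mul (sq_nonneg m), sqrt_sq hm.le, sqrt_mul' D hv.le,
    sqrt_div hv.le D]
  rcases eq_or_ne √D 0 with hD | hD
  · simp [hD]
  · have hsv : √v ≠ 0 := (sqrt_pos.2 hv).ne'
    field_simp
    rw [sq_sqrt hv.le]

theorem stock_default_correlation_closed_form_general
    {Ω : Type*} [MeasurableSpace Ω] (P : Measure Ω) [IsProbabilityMeasure P]
    (Z B : Ω → ℝ) (hmZ : Measurable Z) (hmB : Measurable B)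
    (hindep : IndepFun Z B P)
    (hZ : Measure.map Z P = gaussianReal 0 1)
    (p : ℝ) (hp : p ∈ Set.Ioo (0 : ℝ) 1)
    (hB01 : ∀ ω, B ω = 0 ∨ B ω = 1)
    (hBp : P {ω | B ω = 1} = ENNReal.ofReal p)
    (s σ t μ q κ : ℝ) (hs : 0 < s) (hσ : 0 < σ) (ht : 0 < t)
    (S : Ω → ℝ)
    (hS : S = fun ω =>
      s * Real.exp ((μ - q - σ ^ 2 / 2) * t + σ * Real.sqrt t * Z ω) * (1 + κ * B ω))
    (D : ℝ)
    (hD : D = Real.exp (σ ^ 2 * t) * (1 + κ * p * (2 + κ)) - (1 + κ * p * (2 + κ * p))) :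
    0 < D
      ∧ var P S = s ^ 2 * Real.exp (2 * (μ - q) * t) * D
      ∧ 0 < var P S
      ∧ corr P S B = κ * Real.sqrt (p * (1 - p) / D) := by
  obtain ⟨hp0, hp1⟩ := hp
  have ha : (σ * √t) ^ 2 = σ ^ 2 * t := by rw [mul_pow, sq_sqrt ht.le]
  have hS_eq (ω : Ω) : S ω = s * exp ((μ - q) * t)
      * (exp (σ * √t * Z ω - (σ * √t) ^ 2 / 2) * (1 + κ * B ω)) := by
    rw [hS, ha, ← mul_assoc, mul_assoc s, ← exp_add]
    ring_nf
  obtain ⟨hvarS, hcov, hvarB⟩ := var_cov_of_integral_exp_mul_sub_mul_comp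
    (fun b f hf => by
      rw [integral_exp_mul_sub_mul_comp hmZ hmB hindep hZ b hf,
        integral_comp_of_forall_eq_zero_or_eq_one hmB hB01 hp0.le hBp]) hS_eq
  have hDpos : 0 < D :=
    hD ▸ mul_one_add_sub_one_add_pos (one_lt_exp_iff.2 (by positivity)) hp0.le hp1
  have hvarS' : var P S = (s * exp ((μ - q) * t)) ^ 2 * D := by
    rw [hvarS, ha, hD]; ring
  refine ⟨hDpos, ?_, hvarS' ▸ by positivity, ?_⟩
  · rw [hvarS', mul_pow, ← exp_nat_mul]; push_cast; ring_nf
  · rw [corr, hcov, hvarS', hvarB]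
    exact mul_mul_div_sqrt_sq_mul_mul (by positivity) (mul_pos hp0 (sub_pos.2 hp1))

/-- Closed-form stock–default correlation: positivity of the variance factor `D`,
explicit variance of `S`, and `corr(S,B) = κ √(p(1−p)/D)`. -/
theorem stock_default_correlation_closed_form
    {Ω : Type*} [MeasurableSpace Ω] (P : Measure Ω) [IsProbabilityMeasure P]
    (Z B : Ω → ℝ) (hmZ : Measurable Z) (hmB : Measurable B)
    (hindep : IndepFun Z B P)
    (hZ : Measure.map Z P = gaussianReal 0 1)
    (p : ℝ) (hp : p ∈ Set.Ioo (0 : ℝ) 1)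
    (hB01 : ∀ ω, B ω = 0 ∨ B ω = 1)
    (hBp : P {ω | B ω = 1} = ENNReal.ofReal p)
    (s σ t μ q κ : ℝ) (hs : 0 < s) (hσ : 0 < σ) (ht : 0 < t) (hκ : -1 < κ)
    (S : Ω → ℝ)
    (hS : S = fun ω =>
      s * Real.exp ((μ - q - σ ^ 2 / 2) * t + σ * Real.sqrt t * Z ω) * (1 + κ * B ω))
    (D : ℝ)
    (hD : D = Real.exp (σ ^ 2 * t) * (1 + κ * p * (2 + κ)) - (1 + κ * p * (2 + κ * p))) :
    0 < D
      ∧ var P S = s ^ 2 * Real.exp (2 * (μ - q) * t) * D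
      ∧ 0 < var P S
      ∧ corr P S B = κ * Real.sqrt (p * (1 - p) / D) :=
  stock_default_correlation_closed_form_general P Z B hmZ hmB hindep hZ p hp hB01 hBp s σ t μ q κ hs
    hσ ht S hS D hD
end

section
/- Let t ≥ 0, x ≠ 0 and y ∈ ℝ with c := 2x + y² > 0. Then ∫_0^t e^{−xu} Φ(y√u) du = (y/(x√c)) (Φ(√(ct)) − 1/2) − (1/x) (e^{−xt} Φ(y√t) − 1/2), i.e. the integral equals Υ₀(t,x,y). -/
open MeasureTheory intervalIntegral Real ProbabilityTheory Filter Asymptotics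

/-
Υ₀(·, x, y) vanishes at 0 and is an antiderivative of u ↦ e^{-xu} Φ(y√u) on (0, ∞): writing
Φ(√(cu)) = Φ(√c √u), the derivative of its first term produces φ(√c √u), which equals
e^{-xu} φ(y√u) because c u / 2 = x u + y² u / 2, and this cancels the φ-term coming from the
product rule in the second term.
-/

lemma gaussPdf_eq_gaussianPDFReal : gaussPdf = gaussianPDFReal 0 1 := by
  ext x
  simp [gaussPdf, gaussianPDFReal, div_eq_inv_mul]

lemma continuous_gaussPdf : Continuous gaussPdf := by
  unfold gaussPdf
  fun_prop

lemma integrable_gaussPdf : Integrable gaussPdf :=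
  gaussPdf_eq_gaussianPDFReal ▸ integrable_gaussianPDFReal 0 1

lemma integral_gaussPdf : ∫ x, gaussPdf x = 1 :=
  gaussPdf_eq_gaussianPDFReal ▸ integral_gaussianPDFReal_eq_one 0 one_ne_zero

lemma gaussPdf_neg (x : ℝ) : gaussPdf (-x) = gaussPdf x := by
  simp [gaussPdf]

lemma Phi_zero : Phi 0 = 1 / 2 := by
  have hsymm : Phi 0 = ∫ u in Set.Ioi 0, gaussPdf u := by
    have h := integral_comp_neg_Iic 0 gaussPdf
    simp only [gaussPdf_neg, neg_zero] at h
    exact h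
  have htotal : Phi 0 + ∫ u in Set.Ioi 0, gaussPdf u = 1 := by
    rw [← integral_gaussPdf]
    exact integral_Iic_add_Ioi integrable_gaussPdf.integrableOn integrable_gaussPdf.integrableOn
  linarith

lemma Phi_eq_Phi_zero_add_integral (x : ℝ) : Phi x = Phi 0 + ∫ u in (0 : ℝ)..x, gaussPdf u := by
  rw [← integral_Iic_sub_Iic integrable_gaussPdf.integrableOn integrable_gaussPdf.integrableOn]
  exact (add_sub_cancel _ _).symm

lemma hasDerivAt_Phi (x : ℝ) : HasDerivAt Phi (gaussPdf x) x := by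
  rw [funext Phi_eq_Phi_zero_add_integral]
  exact (integral_hasDerivAt_right integrable_gaussPdf.intervalIntegrable
    continuous_gaussPdf.aestronglyMeasurable.stronglyMeasurableAtFilter
    continuous_gaussPdf.continuousAt).const_add _

lemma continuous_Phi : Continuous Phi :=
  continuous_iff_continuousAt.mpr fun x => (hasDerivAt_Phi x).continuousAt

lemma hasDerivAt_Phi_mul_sqrt (a : ℝ) {u : ℝ} (hu : 0 < u) :
    HasDerivAt (fun v => Phi (a * √v)) (gaussPdf (a * √u) * (a / (2 * √u))) u := by
  have hsqrt := (hasDerivAt_sqrt hu.ne').const_mul a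
  rw [mul_one_div] at hsqrt
  exact (hasDerivAt_Phi _).comp u hsqrt

lemma gaussPdf_sqrt_mul {x y : ℝ} (hc : 0 ≤ 2 * x + y ^ 2) (s : ℝ) :
    gaussPdf (√(2 * x + y ^ 2) * s) = exp (-x * s ^ 2) * gaussPdf (y * s) := by
  simp only [gaussPdf, mul_pow, sq_sqrt hc, ← mul_div_assoc, ← exp_add]
  ring_nf

lemma Ups0_zero (x y : ℝ) : Ups0 0 x y = 0 := by
  simp [Ups0, Phi_zero]

lemma continuous_Ups0 (x y : ℝ) : Continuous fun t => Ups0 t x y := by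
  have := continuous_Phi
  unfold Ups0
  fun_prop

lemma hasDerivAt_Ups0 {x y u : ℝ} (hx : x ≠ 0) (hc : 0 < 2 * x + y ^ 2) (hu : 0 < u) :
    HasDerivAt (fun t => Ups0 t x y) (exp (-x * u) * Phi (y * √u)) u := by
  set c := 2 * x + y ^ 2
  have hUps0 : (fun t => Ups0 t x y) = fun t =>
      y / (x * √c) * (Phi (√c * √t) - 1 / 2) - 1 / x * (exp (-x * t) * Phi (y * √t) - 1 / 2) := by
    ext t
    rw [Ups0, sqrt_mul hc.le]
  have hexp : HasDerivAt (fun t => exp (-x * t)) (exp (-x * u) * -x) u := by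
    simpa using ((hasDerivAt_id u).const_mul (-x)).exp
  have H := (((hasDerivAt_Phi_mul_sqrt √c hu).sub_const (1 / 2)).const_mul (y / (x * √c))).sub
    (((hexp.mul (hasDerivAt_Phi_mul_sqrt y hu)).sub_const (1 / 2)).const_mul (1 / x))
  rw [hUps0]
  refine H.congr_deriv ?_
  rw [gaussPdf_sqrt_mul hc.le, sq_sqrt hu.le]
  have hsc : √c ≠ 0 := (sqrt_pos.mpr hc).ne'
  have hsu : √u ≠ 0 := (sqrt_pos.mpr hu).ne'
  field_simp
  ring

/-- Lemma `upsilon-function`: `∫_0^t e^{−xu} Φ(y√u) du = Υ₀(t,x,y)`. -/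
theorem integral_exp_mul_Phi (t x y : ℝ) (ht : 0 ≤ t) (hx : x ≠ 0)
    (hc : 0 < 2 * x + y ^ 2) :
    ∫ u in (0 : ℝ)..t, Real.exp (-x * u) * Phi (y * Real.sqrt u) = Ups0 t x y := by
  have hint : IntervalIntegrable (fun u => exp (-x * u) * Phi (y * √u)) volume 0 t := by
    have := continuous_Phi
    exact Continuous.intervalIntegrable (by fun_prop) 0 t
  rw [integral_eq_sub_of_hasDerivAt_of_le ht (continuous_Ups0 x y).continuousOn
    (fun u hu => hasDerivAt_Ups0 hx hc hu.1) hint, Ups0_zero, sub_zero]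
end

section
/- Let s > 0, k > 0, σ > 0, t > 0 and m ∈ ℝ. Then ∫_ℝ max{ k − s e^{(m−σ²/2)t + σ√t·ζ}, 0 } dγ(ζ) = k Φ(−d₂(t)) − s e^{mt} Φ(−d₁(t)) = BS_P(s,k,t). (This is the Black–Scholes formula for the undiscounted price of a European put option on an asset whose price at time t is lognormal with drift m and volatility σ.) -/
/-!
The put payoff `max (k - s e^{a + b ζ}) 0` vanishes off the half-line `ζ ≤ c` with
`c = (log (k/s) - a) / b`, which for `a = (m - σ²/2) t`, `b = σ√t` is `c = -d₂`. There the
stock term is handled by completing the square: `e^{b ζ - b²/2}` times the standard normal density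
is the density shifted by `b`, so `∫_{ζ ≤ c} s e^{a + b ζ} dγ = s e^{a + b²/2} Φ(c - b)`, and
`a + b²/2 = m t`, `c - b = -d₁`.
-/

open MeasureTheory intervalIntegral Real ProbabilityTheory Filter Asymptotics

lemma gaussianPDFReal_zero_one : gaussianPDFReal 0 1 = gaussPdf := by
  ext x
  simp [gaussianPDFReal, gaussPdf, div_eq_inv_mul]

lemma integral_gaussMeasure (f : ℝ → ℝ) : ∫ x, f x ∂gaussMeasure = ∫ x, gaussPdf x * f x := by
  simp [gaussMeasure, integral_gaussianReal_eq_integral_smul one_ne_zero, gaussianPDFReal_zero_one]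

lemma setIntegral_Iic_gaussPdf_sub (b c : ℝ) :
    ∫ x in Set.Iic c, gaussPdf (x - b) = Phi (c - b) := by
  have := (measurePreserving_sub_right volume b).setIntegral_preimage_emb
    (measurableEmbedding_subRight b) gaussPdf (Set.Iic (c - b))
  rwa [Set.preimage_sub_const_Iic, sub_add_cancel] at this

lemma exp_mul_gaussPdf (b x : ℝ) : exp (b * x - b ^ 2 / 2) * gaussPdf x = gaussPdf (x - b) := by
  simp only [gaussPdf, ← mul_div_assoc, ← exp_add]
  ring_nf

lemma mul_exp_le_iff {s k a b x : ℝ} (hs : 0 < s) (hk : 0 < k) (hb : 0 < b) :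
    s * exp (a + b * x) ≤ k ↔ x ≤ (log (k / s) - a) / b := by
  rw [← le_div_iff₀' hs, ← le_log_iff_exp_le (div_pos hk hs), le_div_iff₀ hb]
  constructor <;> intro h <;> linarith

lemma gaussPdf_mul_max_sub_mul_exp {s k a b : ℝ} (hs : 0 < s) (hk : 0 < k) (hb : 0 < b) (x : ℝ) :
    gaussPdf x * max (k - s * exp (a + b * x)) 0
      = (Set.Iic ((log (k / s) - a) / b)).indicator
          (fun x ↦ k * gaussPdf x - s * exp (a + b ^ 2 / 2) * gaussPdf (x - b)) x := by
  by_cases hx : x ∈ Set.Iic ((log (k / s) - a) / b)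
  · have hle : s * exp (a + b * x) ≤ k := (mul_exp_le_iff hs hk hb).2 hx
    have hexp : exp (a + b ^ 2 / 2) * exp (b * x - b ^ 2 / 2) = exp (a + b * x) := by
      rw [← exp_add]; ring_nf
    rw [Set.indicator_of_mem hx, max_eq_left (sub_nonneg.2 hle), ← exp_mul_gaussPdf]
    linear_combination s * gaussPdf x * hexp
  · have hlt : k < s * exp (a + b * x) := not_le.1 ((mul_exp_le_iff hs hk hb).not.2 hx)
    rw [Set.indicator_of_notMem hx, max_eq_right (by linarith), mul_zero]

theorem integral_gaussMeasure_max_sub_mul_exp {s k a b : ℝ} (hs : 0 < s) (hk : 0 < k)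
    (hb : 0 < b) :
    ∫ x, max (k - s * exp (a + b * x)) 0 ∂gaussMeasure
      = k * Phi ((log (k / s) - a) / b)
        - s * exp (a + b ^ 2 / 2) * Phi ((log (k / s) - a) / b - b) := by
  rw [integral_gaussMeasure, integral_congr_ae (ae_of_all _ (gaussPdf_mul_max_sub_mul_exp hs hk hb)),
    MeasureTheory.integral_indicator measurableSet_Iic,
    integral_sub (integrable_gaussPdf.const_mul k).integrableOn
      ((integrable_gaussPdf.comp_sub_right b).const_mul _).integrableOn,
    MeasureTheory.integral_const_mul, MeasureTheory.integral_const_mul,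
    setIntegral_Iic_gaussPdf_sub]
  rfl

/-- Black–Scholes formula for the undiscounted price of a European put option on
a lognormal asset with drift `m` and volatility `σ`. -/
theorem black_scholes_put (σ m s k t : ℝ) (hs : 0 < s) (hk : 0 < k)
    (hσ : 0 < σ) (ht : 0 < t) :
    (∫ ζ, max (k - s * Real.exp ((m - σ ^ 2 / 2) * t + σ * Real.sqrt t * ζ)) 0 ∂gaussMeasure)
        = k * Phi (-d2 σ m s k t) - s * Real.exp (m * t) * Phi (-d1 σ m s k t)
      ∧ k * Phi (-d2 σ m s k t) - s * Real.exp (m * t) * Phi (-d1 σ m s k t)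
        = BSP σ m s k t := by
  have hb : 0 < σ * √t := mul_pos hσ (sqrt_pos.2 ht)
  have hstrike : (log (k / s) - (m - σ ^ 2 / 2) * t) / (σ * √t) = -d2 σ m s k t := by
    rw [d2, d1, log_div hk.ne' hs.ne', log_div hs.ne' hk.ne']
    field_simp
    rw [sq_sqrt ht.le]
    ring
  have hforward : (m - σ ^ 2 / 2) * t + (σ * √t) ^ 2 / 2 = m * t := by
    rw [mul_pow, sq_sqrt ht.le]; ring
  refine ⟨?_, rfl⟩
  rw [integral_gaussMeasure_max_sub_mul_exp hs hk hb, hstrike, hforward, d2, neg_sub,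
    sub_sub_cancel_left]
end
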